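/- arXiv:2411.14382 — 2 statements merged into one kernel-verified Lean document; each statement's English description precedes it below -/
import Mathlib

section
/- Let c > 0, α ∈ ℝ, λ ∈ ℝ, set s = (λ+α)² − 4c, and assume s < 0. Put β = √(−s)/2. Then the unique solution x of the memory ODE with kernel M(t) = c·e^{αt} and parameter λ is given by x(t) = e^{−(λ−α)·t/2}·[cos(βt) − ((λ+α)/(2β))·sin(βt)] for all t ≥ 0. -/
/-!
The kernel `c·e^{αt}` makes the memory term `c·e^{αt}·∫₀ᵗ e^{-αs} x(s) ds` differentiable, and
eliminating it between the equation and its derivative gives the second-order linear ODE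
`x'' = (αλ - c)·x + (α - λ)·x'` with `x(0) = 1`, `x'(0) = -λ`. Its characteristic roots are
`(α - λ)/2 ± iβ`, so the damped oscillation in the statement solves the same initial value problem,
and uniqueness for linear ODEs identifies the two.
-/

noncomputable section

/-- `MemSol M lam x x'` says `x` is a solution on `[0,∞)` of the memory ODE
`x'(t) + lam·x(t) + ∫₀ᵗ M(t−s)·x(s) ds = 0`, `x(0)=1`, with continuous
derivative `x'` on `[0,∞)` (i.e. `x` is continuously differentiable there). -/
def MemSol (M : ℝ → ℝ) (lam : ℝ) (x x' : ℝ → ℝ) : Prop :=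
  x 0 = 1 ∧ ContinuousOn x' (Set.Ici 0) ∧
    (∀ t ∈ Set.Ici (0 : ℝ), HasDerivWithinAt x (x' t) (Set.Ici 0) t) ∧
    (∀ t ∈ Set.Ici (0 : ℝ), x' t + lam * x t + ∫ s in (0:ℝ)..t, M (t - s) * x s = 0)

open Set Real

/-- The companion matrix of `y'' = a·y + b·y'`, acting on `(y, y')`. -/
def companion (a b : ℝ) : ℝ × ℝ →L[ℝ] ℝ × ℝ :=
  (ContinuousLinearMap.snd ℝ ℝ ℝ).prod
    (a • ContinuousLinearMap.fst ℝ ℝ ℝ + b • ContinuousLinearMap.snd ℝ ℝ ℝ)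

@[simp]
theorem companion_apply (a b : ℝ) (p : ℝ × ℝ) : companion a b p = (p.2, a * p.1 + b * p.2) :=
  rfl

theorem eqOn_Ici_of_hasDerivWithinAt_clm {E : Type*} [NormedAddCommGroup E] [NormedSpace ℝ E]
    (L : E →L[ℝ] E) {f g : ℝ → E} {a : ℝ}
    (hf : ContinuousOn f (Ici a)) (hf' : ∀ t ∈ Ici a, HasDerivWithinAt f (L (f t)) (Ici t) t)
    (hg : ContinuousOn g (Ici a)) (hg' : ∀ t ∈ Ici a, HasDerivWithinAt g (L (g t)) (Ici t) t)
    (ha : f a = g a) : EqOn f g (Ici a) := fun _ hT =>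
  ODE_solution_unique (v := fun _ => L) (fun _ => L.lipschitz) (hf.mono Icc_subset_Ici_self)
    (fun t ht => hf' t ht.1) (hg.mono Icc_subset_Ici_self) (fun t ht => hg' t ht.1) ha
    ⟨hT, le_rfl⟩

theorem hasDerivWithinAt_intervalIntegral_of_continuousOn_Ici {E : Type*}
    [NormedAddCommGroup E] [NormedSpace ℝ E] [CompleteSpace E] {f : ℝ → E} {a t : ℝ}
    (hf : ContinuousOn f (Ici a)) (ht : a ≤ t) :
    HasDerivWithinAt (fun u => ∫ s in a..u, f s) (f t) (Ici t) t := by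
  have hIoi : Ioi t ⊆ Ici a := fun s hs => ht.trans (le_of_lt hs)
  refine intervalIntegral.integral_hasDerivWithinAt_right ?_ ?_ ((hf t ht).mono hIoi)
  · exact (hf.mono (by rw [uIcc_of_le ht]; exact Icc_subset_Ici_self)).intervalIntegrable
  · exact ⟨Ici a, Filter.mem_of_superset self_mem_nhdsWithin hIoi,
      hf.aestronglyMeasurable measurableSet_Ici⟩

/-- `exp (p t) (A cos βt + B sin βt)`: the real solutions of a linear second-order ODE with
characteristic roots `p ± iβ`. -/
def dampedOsc (p β A B t : ℝ) : ℝ :=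
  exp (p * t) * (A * cos (β * t) + B * sin (β * t))

theorem hasDerivAt_dampedOsc (p β A B t : ℝ) :
    HasDerivAt (dampedOsc p β A B) (dampedOsc p β (p * A + β * B) (p * B - β * A) t) t := by
  have hlin (k : ℝ) : HasDerivAt (fun u => k * u) k t := by
    simpa using (hasDerivAt_id' t).const_mul k
  have hprod := (hlin p).exp.mul (((hlin β).cos.const_mul A).add ((hlin β).sin.const_mul B))
  refine hprod.congr_deriv ?_
  simp only [dampedOsc, Pi.add_apply]
  ring

theorem hasDerivAt_dampedOsc_companion (p β A B t : ℝ) :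
    HasDerivAt (fun u => (dampedOsc p β A B u, dampedOsc p β (p * A + β * B) (p * B - β * A) u))
      (companion (-(p ^ 2 + β ^ 2)) (2 * p)
        (dampedOsc p β A B t, dampedOsc p β (p * A + β * B) (p * B - β * A) t)) t := by
  refine ((hasDerivAt_dampedOsc p β A B t).prodMk (hasDerivAt_dampedOsc p β _ _ t)).congr_deriv ?_
  simp only [companion_apply, Prod.mk.injEq, true_and, dampedOsc]
  ring

namespace MemSol

variable {c α lam : ℝ} {x x' : ℝ → ℝ}

theorem continuousOn {M : ℝ → ℝ} (hx : MemSol M lam x x') : ContinuousOn x (Ici 0) :=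
  fun t ht => (hx.2.2.1 t ht).continuousWithinAt

theorem deriv_eq_of_exp_kernel (hx : MemSol (fun t => c * exp (α * t)) lam x x') {t : ℝ}
    (ht : 0 ≤ t) :
    x' t = -(lam * x t) - c * exp (α * t) * ∫ s in (0:ℝ)..t, exp (-(α * s)) * x s := by
  have hfactor : (∫ s in (0:ℝ)..t, c * exp (α * (t - s)) * x s)
      = c * exp (α * t) * ∫ s in (0:ℝ)..t, exp (-(α * s)) * x s := by
    rw [← intervalIntegral.integral_const_mul]
    refine intervalIntegral.integral_congr fun s _ => ?_
    rw [mul_sub, sub_eq_add_neg, exp_add]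
    ring
  have h := hx.2.2.2 t ht
  rw [hfactor] at h
  linarith

theorem deriv_zero_of_exp_kernel (hx : MemSol (fun t => c * exp (α * t)) lam x x') :
    x' 0 = -lam := by
  simpa [hx.1] using hx.deriv_eq_of_exp_kernel le_rfl

theorem hasDerivWithinAt_deriv_of_exp_kernel (hx : MemSol (fun t => c * exp (α * t)) lam x x')
    {t : ℝ} (ht : 0 ≤ t) :
    HasDerivWithinAt x' ((α * lam - c) * x t + (α - lam) * x' t) (Ici t) t := by
  have hsub : Ici t ⊆ Ici 0 := Ici_subset_Ici.mpr ht
  set I : ℝ → ℝ := fun u => ∫ s in (0:ℝ)..u, exp (-(α * s)) * x s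
  have hx1 : HasDerivWithinAt x (x' t) (Ici t) t := (hx.2.2.1 t ht).mono hsub
  have hI : HasDerivWithinAt I (exp (-(α * t)) * x t) (Ici t) t :=
    hasDerivWithinAt_intervalIntegral_of_continuousOn_Ici
      ((continuous_exp.comp (continuous_const.mul continuous_id).neg).continuousOn.mul
        hx.continuousOn) ht
  have hexp : HasDerivWithinAt (fun u => exp (α * u)) (exp (α * t) * α) (Ici t) t := by
    simpa using (((hasDerivAt_id t).const_mul α).exp).hasDerivWithinAt
  have hrhs := (hx1.const_mul lam).neg.sub ((hexp.const_mul c).mul hI)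
  have hmem : x' t = -(lam * x t) - c * exp (α * t) * I t := hx.deriv_eq_of_exp_kernel ht
  have hcancel : exp (α * t) * exp (-(α * t)) = 1 := by rw [← exp_add]; simp
  refine (hrhs.congr (fun u hu => hx.deriv_eq_of_exp_kernel (hsub hu)) hmem).congr_deriv ?_
  linear_combination -α * hmem - c * x t * hcancel

theorem hasDerivWithinAt_companion_of_exp_kernel
    (hx : MemSol (fun t => c * exp (α * t)) lam x x') {t : ℝ} (ht : 0 ≤ t) :
    HasDerivWithinAt (fun u => (x u, x' u)) (companion (α * lam - c) (α - lam) (x t, x' t))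
      (Ici t) t :=
  ((hx.2.2.1 t ht).mono (Ici_subset_Ici.mpr ht)).prodMk
    (hx.hasDerivWithinAt_deriv_of_exp_kernel ht)

theorem eqOn_dampedOsc_of_exp_kernel (hx : MemSol (fun t => c * exp (α * t)) lam x x')
    {p β B : ℝ} (hp : α - lam = 2 * p) (hpβ : α * lam - c = -(p ^ 2 + β ^ 2))
    (hB : p + β * B = -lam) : EqOn x (dampedOsc p β 1 B) (Ici 0) := by
  have hosc (t : ℝ) := hasDerivAt_dampedOsc_companion p β 1 B t
  have hpair := eqOn_Ici_of_hasDerivWithinAt_clm (companion (-(p ^ 2 + β ^ 2)) (2 * p))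
    (hx.continuousOn.prodMk hx.2.1)
    (fun t ht => hp ▸ hpβ ▸ hx.hasDerivWithinAt_companion_of_exp_kernel ht)
    (continuous_iff_continuousAt.2 fun t => (hosc t).continuousAt).continuousOn
    (fun t _ => (hosc t).hasDerivWithinAt)
    (by simp [dampedOsc, hx.1, hx.deriv_zero_of_exp_kernel, hB])
  exact fun t ht => congrArg Prod.fst (hpair ht)

end MemSol

theorem stmt13_general (c α lam : ℝ)
    (hs : (lam + α) ^ 2 - 4 * c < 0)
    (β : ℝ) (hβ : β = Real.sqrt (-((lam + α) ^ 2 - 4 * c)) / 2)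
    (x x' : ℝ → ℝ) (hx : MemSol (fun t => c * Real.exp (α * t)) lam x x') :
    ∀ t ≥ (0:ℝ),
      x t = Real.exp (-((lam - α) * t / 2)) *
        (Real.cos (β * t) - ((lam + α) / (2 * β)) * Real.sin (β * t)) := by
  have hβpos : 0 < β := hβ ▸ div_pos (sqrt_pos.mpr (by linarith)) two_pos
  have hβsq : β ^ 2 = c - (lam + α) ^ 2 / 4 := by
    rw [hβ, div_pow, sq_sqrt (by linarith)]
    ring
  intro t ht
  rw [hx.eqOn_dampedOsc_of_exp_kernel (p := (α - lam) / 2) (B := -((lam + α) / (2 * β)))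
    (by ring) (by rw [hβsq]; ring) (by field_simp; ring) ht, dampedOsc]
  congr 1
  · congr 1
    ring
  · ring

/-- Explicit solution of the memory ODE with kernel `c·e^{αt}` when the discriminant
`s = (λ+α)² − 4c` is negative, with `β = √(−s)/2`. -/
theorem stmt13 (c α lam : ℝ) (hc : 0 < c)
    (hs : (lam + α) ^ 2 - 4 * c < 0)
    (β : ℝ) (hβ : β = Real.sqrt (-((lam + α) ^ 2 - 4 * c)) / 2)
    (x x' : ℝ → ℝ) (hx : MemSol (fun t => c * Real.exp (α * t)) lam x x') :
    ∀ t ≥ (0:ℝ),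
      x t = Real.exp (-((lam - α) * t / 2)) *
        (Real.cos (β * t) - ((lam + α) / (2 * β)) * Real.sin (β * t)) :=
  stmt13_general c α lam hs β hβ x x' hx
end
end

section
/- Let c > 0, α ∈ ℝ, λ ∈ ℝ, set s = (λ+α)² − 4c, and assume s > 0. Define w⁺ = (−(λ−α) + √s)/2 and w⁻ = (−(λ−α) − √s)/2. Then (w⁺−α)·(w⁻−α) = c > 0 (so the ratio (w⁻−α)/(w⁺−α) is positive), and the unique solution x of the memory ODE with kernel M(t) = c·e^{αt} and parameter λ satisfies, for every t > 0: x(t) = 0 if and only if t = (w⁺ − w⁻)^{−1} · ln[(w⁻−α)/(w⁺−α)]. -/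
/-! For the kernel `c·e^{αt}` the memory term `y(t) = ∫₀ᵗ e^{α(t-s)} x(s) ds` satisfies
`y' = x + α·y`, so `(x, y)` solves the planar linear system `x' = -λx - cy`, `y' = x + αy`.
Its eigenvalues are the roots `w±` of `w² + (λ-α)w + c - αλ`, with eigenvectors `(w - α, 1)`,
so by uniqueness for linear ODEs `x(t) = ((w⁺-α)e^{w⁺t} - (w⁻-α)e^{w⁻t}) / (w⁺-w⁻)`.
This vanishes exactly when `e^{(w⁺-w⁻)t} = (w⁻-α)/(w⁺-α)`, a positive number because the
product of the roots shifted by `α` is `c`. -/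

noncomputable section

open Set Real

section LinearODE

variable {E : Type*} [NormedAddCommGroup E] [NormedSpace ℝ E]

theorem eqOn_Ici_of_hasDerivWithinAt_clm_s14 (L : E →L[ℝ] E) {p q : ℝ → E} {a : ℝ}
    (hp : ∀ t ∈ Ici a, HasDerivWithinAt p (L (p t)) (Ici a) t)
    (hq : ∀ t ∈ Ici a, HasDerivWithinAt q (L (q t)) (Ici a) t)
    (ha : p a = q a) : EqOn p q (Ici a) := by
  have hcont : ∀ {r : ℝ → E}, (∀ t ∈ Ici a, HasDerivWithinAt r (L (r t)) (Ici a) t) →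
      ∀ b, ContinuousOn r (Icc a b) := fun hr b t ht =>
    (hr t ht.1).continuousWithinAt.mono Icc_subset_Ici_self
  have hderiv : ∀ {r : ℝ → E}, (∀ t ∈ Ici a, HasDerivWithinAt r (L (r t)) (Ici a) t) →
      ∀ b, ∀ t ∈ Ico a b, HasDerivWithinAt r (L (r t)) (Ici t) t := fun hr _ t ht =>
    (hr t ht.1).mono (Ici_subset_Ici.2 ht.1)
  intro b hb
  exact ODE_solution_unique_of_mem_Icc_right (v := fun _ => L) (s := fun _ => univ)
    (fun _ _ => L.lipschitz.lipschitzOnWith) (hcont hp b) (hderiv hp b) (fun _ _ => trivial)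
    (hcont hq b) (hderiv hq b) (fun _ _ => trivial) ha ⟨hb, le_rfl⟩

variable [CompleteSpace E]

theorem hasDerivWithinAt_integral_Ici_of_continuousOn {f : ℝ → E} {a t : ℝ}
    (hf : ContinuousOn f (Ici a)) (ht : a ≤ t) :
    HasDerivWithinAt (fun u => ∫ s in a..u, f s) (f t) (Ici a) t := by
  -- extend `f` continuously to `ℝ` by the constant `f a` on `(-∞, a]`
  have hext : Continuous (fun s => f (max a s)) :=
    hf.comp_continuous (continuous_const.max continuous_id) (fun s => le_max_left a s)
  have hmax : ∀ {s}, a ≤ s → max a s = s := fun h => max_eq_right h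
  have hd := (hext.integral_hasStrictDerivAt a t).hasDerivAt.hasDerivWithinAt (s := Ici a)
  rw [hmax ht] at hd
  refine hd.congr_of_mem (fun u hu => intervalIntegral.integral_congr fun s hs => ?_) ht
  rw [uIcc_of_le hu] at hs
  simp only [hmax hs.1]

end LinearODE

theorem integral_exp_mul_sub_mul (α a u : ℝ) (x : ℝ → ℝ) :
    ∫ s in a..u, exp (α * (u - s)) * x s = exp (α * u) * ∫ s in a..u, exp (-(α * s)) * x s := by
  rw [← intervalIntegral.integral_const_mul]
  congr 1 with s
  rw [← mul_assoc, ← exp_add]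
  ring_nf

theorem hasDerivWithinAt_integral_exp_mul_sub_mul {x : ℝ → ℝ} {a t : ℝ} (α : ℝ)
    (hx : ContinuousOn x (Ici a)) (ht : a ≤ t) :
    HasDerivWithinAt (fun u => ∫ s in a..u, exp (α * (u - s)) * x s)
      (x t + α * ∫ s in a..t, exp (α * (t - s)) * x s) (Ici a) t := by
  simp only [integral_exp_mul_sub_mul α a]
  have hI : ContinuousOn (fun s => exp (-(α * s)) * x s) (Ici a) := by fun_prop
  have hexp : HasDerivAt (fun u => exp (α * u)) (exp (α * t) * α) t := by
    simpa using ((hasDerivAt_id t).const_mul α).exp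
  refine (hexp.hasDerivWithinAt.mul
    (hasDerivWithinAt_integral_Ici_of_continuousOn hI ht)).congr_deriv ?_
  rw [← mul_assoc, ← exp_add]
  simp only [add_neg_cancel, exp_zero, one_mul]
  ring

open ContinuousLinearMap in
def expKernelSystem (c α lam : ℝ) : ℝ × ℝ →L[ℝ] ℝ × ℝ :=
  ((-lam) • fst ℝ ℝ ℝ + (-c) • snd ℝ ℝ ℝ).prod (fst ℝ ℝ ℝ + α • snd ℝ ℝ ℝ)

@[simp]
theorem expKernelSystem_apply (c α lam : ℝ) (p : ℝ × ℝ) :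
    expKernelSystem c α lam p = (-lam * p.1 - c * p.2, p.1 + α * p.2) := by
  simp [expKernelSystem, sub_eq_add_neg]

theorem MemSol.hasDerivWithinAt_expKernelSystem {c α lam : ℝ} {x x' : ℝ → ℝ}
    (hx : MemSol (fun t => c * exp (α * t)) lam x x') {t : ℝ} (ht : 0 ≤ t) :
    HasDerivWithinAt (fun u => (x u, ∫ s in (0 : ℝ)..u, exp (α * (u - s)) * x s))
      (expKernelSystem c α lam (x t, ∫ s in (0 : ℝ)..t, exp (α * (t - s)) * x s)) (Ici 0) t := by
  obtain ⟨-, -, hderiv, hequation⟩ := hx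
  have hcont : ContinuousOn x (Ici 0) := fun u hu => (hderiv u hu).continuousWithinAt
  have hx' : x' t = -lam * x t - c * ∫ s in (0 : ℝ)..t, exp (α * (t - s)) * x s := by
    have h := hequation t ht
    simp only [mul_assoc, intervalIntegral.integral_const_mul] at h
    linarith
  rw [expKernelSystem_apply, ← hx']
  exact (hderiv t ht).prodMk (hasDerivWithinAt_integral_exp_mul_sub_mul α hcont ht)

theorem hasDerivAt_exp_smul_eigenvector {c α lam w : ℝ}
    (hw : w ^ 2 + (lam - α) * w + (c - α * lam) = 0) (t : ℝ) :
    HasDerivAt (fun u => exp (w * u) • (w - α, (1 : ℝ)))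
      (expKernelSystem c α lam (exp (w * t) • (w - α, 1))) t := by
  have hexp : HasDerivAt (fun u => exp (w * u)) (exp (w * t) * w) t := by
    simpa using ((hasDerivAt_id t).const_mul w).exp
  refine (hexp.smul_const (w - α, (1 : ℝ))).congr_deriv ?_
  simp only [expKernelSystem_apply, Prod.smul_mk, smul_eq_mul, Prod.mk.injEq]
  exact ⟨by linear_combination exp (w * t) * hw, by ring⟩

theorem MemSol.eq_of_char_roots {c α lam wp wm : ℝ} {x x' : ℝ → ℝ}
    (hx : MemSol (fun t => c * exp (α * t)) lam x x')
    (hwp : wp ^ 2 + (lam - α) * wp + (c - α * lam) = 0)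
    (hwm : wm ^ 2 + (lam - α) * wm + (c - α * lam) = 0) (hne : wp ≠ wm) {t : ℝ} (ht : 0 ≤ t) :
    x t = ((wp - α) * exp (wp * t) - (wm - α) * exp (wm * t)) / (wp - wm) := by
  have hne' : wp - wm ≠ 0 := sub_ne_zero.2 hne
  set p : ℝ → ℝ × ℝ := fun u =>
    (wp - wm)⁻¹ • (exp (wp * u) • (wp - α, (1 : ℝ)) - exp (wm * u) • (wm - α, (1 : ℝ)))
  have hp : ∀ u, HasDerivAt p (expKernelSystem c α lam (p u)) u := fun u =>
    (((hasDerivAt_exp_smul_eigenvector hwp u).sub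
      (hasDerivAt_exp_smul_eigenvector hwm u)).const_smul (wp - wm)⁻¹).congr_deriv
      (by simp only [p, map_smul, map_sub])
  have hp0 : p 0 = (1, 0) := by
    ext <;> simp [p, hne']
  have hxp := eqOn_Ici_of_hasDerivWithinAt_clm_s14 (expKernelSystem c α lam)
    (fun u hu => hx.hasDerivWithinAt_expKernelSystem hu) (fun u _ => (hp u).hasDerivWithinAt)
    (by simp [hx.1, hp0]) ht
  simp only [p, Prod.smul_mk, Prod.mk_sub_mk, smul_eq_mul, Prod.mk.injEq] at hxp
  rw [hxp.1, div_eq_inv_mul]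
  ring

theorem mul_exp_eq_mul_exp_iff {a b p q t : ℝ} (hba : 0 < b / a) (hpq : p ≠ q) :
    a * exp (p * t) = b * exp (q * t) ↔ t = (p - q)⁻¹ * log (b / a) := by
  have ha : a ≠ 0 := by
    rintro rfl
    simp at hba
  rw [eq_inv_mul_iff_mul_eq₀ (sub_ne_zero.2 hpq), ← exp_eq_exp (x := (p - q) * t), exp_log hba,
    eq_div_iff ha, sub_mul, exp_sub, div_mul_eq_mul_div, div_eq_iff (exp_pos _).ne', mul_comm a]

/-- In the positive-discriminant case, `(w⁺−α)(w⁻−α) = c > 0` and the unique zero of the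
solution in `(0,∞)` is `(w⁺−w⁻)⁻¹·ln[(w⁻−α)/(w⁺−α)]`. -/
theorem stmt14 (c α lam : ℝ) (hc : 0 < c)
    (hs : 0 < (lam + α) ^ 2 - 4 * c)
    (wp wm : ℝ)
    (hwp : wp = (-(lam - α) + Real.sqrt ((lam + α) ^ 2 - 4 * c)) / 2)
    (hwm : wm = (-(lam - α) - Real.sqrt ((lam + α) ^ 2 - 4 * c)) / 2)
    (x x' : ℝ → ℝ) (hx : MemSol (fun t => c * Real.exp (α * t)) lam x x') :
    (wp - α) * (wm - α) = c ∧
    (∀ t > (0:ℝ), (x t = 0 ↔ t = (wp - wm)⁻¹ * Real.log ((wm - α) / (wp - α)))) := by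
  have hsqrt_sq := sq_sqrt hs.le
  have hprod : (wp - α) * (wm - α) = c := by
    rw [hwp, hwm]
    linear_combination (-1 / 4 : ℝ) * hsqrt_sq
  have hroot_p : wp ^ 2 + (lam - α) * wp + (c - α * lam) = 0 := by
    rw [hwp]
    linear_combination hsqrt_sq / 4
  have hroot_m : wm ^ 2 + (lam - α) * wm + (c - α * lam) = 0 := by
    rw [hwm]
    linear_combination hsqrt_sq / 4
  have hne : wp ≠ wm := by
    rw [hwp, hwm]
    linarith [sqrt_pos.2 hs]
  have hratio : 0 < (wm - α) / (wp - α) :=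
    div_pos_iff.2 (mul_pos_iff.1 (by rwa [mul_comm, hprod]))
  refine ⟨hprod, fun t ht => ?_⟩
  rw [hx.eq_of_char_roots hroot_p hroot_m hne ht.le, div_eq_zero_iff,
    or_iff_left (sub_ne_zero.2 hne), sub_eq_zero, mul_exp_eq_mul_exp_iff hratio hne]
end
end
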